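/- For every m ∈ ℕ and r ∈ ℝ there exists a constant C > 0 such that for every u ∈ C^∞(ℝ, ℂ) and every η ∈ ℝ: | D^m( ⟨η⟩^r u )(η) − ⟨η⟩^r · (D^m u)(η) | ≤ C · ⟨η⟩^r · Σ_{l=0}^{m} | (D^l u)(η) |, where D is the operator (D u)(η) = η · u′(η). -/

import Mathlib

/-- The Japanese bracket `⟨η⟩ = (1+η²)^{1/2}`. -/
noncomputable def jb (t : ℝ) : ℝ := Real.sqrt (1 + t ^ 2)

/-- The first-order operator `(D u)(η) = η · u′(η)`. -/
noncomputable def Dop (u : ℝ → ℂ) : ℝ → ℂ := fun η => (η : ℂ) * deriv u η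

/-!
With `w = ⟨η⟩^r` and `φ = η² / ⟨η⟩²` one has `D w = r φ w` and `D φ = 2φ(1 - φ)`, so `D`
maps `w · p(φ)` to `w · (L p)(φ)` for every real polynomial `p`, where
`L p = 2X(1 - X)p' + rXp` (`jbPolyDop`). By the Leibniz rule and induction,
`D^m(w u) = w · ∑_{l ≤ m} q_l(φ) · D^l u` with `q_m = 1`. The leading term is `w · D^m u`,
and the other coefficients `q_l(φ)` are bounded because `φ` takes values in `[0, 1]`.
-/

open Polynomial Finset

section Dop

variable {f g : ℝ → ℂ} {η : ℝ}

lemma Dop_fun_mul (hf : DifferentiableAt ℝ f η) (hg : DifferentiableAt ℝ g η) :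
    Dop (fun t => f t * g t) η = Dop f η * g η + f η * Dop g η := by
  simp only [Dop, deriv_fun_mul hf hg]
  ring

lemma Dop_fun_sum {ι : Type*} {s : Finset ι} {F : ι → ℝ → ℂ}
    (hF : ∀ i ∈ s, DifferentiableAt ℝ (F i) η) :
    Dop (fun t => ∑ i ∈ s, F i t) η = ∑ i ∈ s, Dop (F i) η := by
  simp only [Dop, deriv_fun_sum hF, mul_sum]

lemma ContDiff.iterate_Dop (hf : ContDiff ℝ (⊤ : ℕ∞) f) (n : ℕ) :
    ContDiff ℝ (⊤ : ℕ∞) (Dop^[n] f) := by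
  induction n with
  | zero => exact hf
  | succ n ih =>
    rw [Function.iterate_succ_apply']
    exact Complex.ofRealCLM.contDiff.mul (contDiff_infty_iff_deriv.mp ih).2

end Dop

noncomputable def sqFrac (t : ℝ) : ℝ := t ^ 2 / (1 + t ^ 2)

lemma sqFrac_mem_Icc (t : ℝ) : sqFrac t ∈ Set.Icc 0 1 :=
  ⟨by unfold sqFrac; positivity, by rw [sqFrac, div_le_one (by positivity)]; linarith⟩

lemma hasDerivAt_sqFrac (t : ℝ) : HasDerivAt sqFrac (2 * t / (1 + t ^ 2) ^ 2) t := by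
  have h : HasDerivAt (fun t : ℝ => t ^ 2) (2 * t) t := by simpa using hasDerivAt_pow 2 t
  refine (h.fun_div (h.const_add 1) (by positivity)).congr_deriv ?_
  field_simp
  ring

lemma jb_rpow (r t : ℝ) : jb t ^ r = (1 + t ^ 2) ^ (r / 2) := by
  rw [jb, Real.sqrt_eq_rpow, ← Real.rpow_mul (by positivity)]
  ring_nf

lemma jb_rpow_pos (r t : ℝ) : 0 < jb t ^ r :=
  Real.rpow_pos_of_pos (Real.sqrt_pos.mpr (by positivity)) r

lemma hasDerivAt_jb_rpow (r t : ℝ) :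
    HasDerivAt (fun t => jb t ^ r) (r * t / (1 + t ^ 2) * jb t ^ r) t := by
  have h : HasDerivAt (fun t : ℝ => 1 + t ^ 2) (2 * t) t := by
    simpa using (hasDerivAt_pow 2 t).const_add 1
  simp_rw [jb_rpow]
  refine (h.rpow_const (Or.inl (by positivity))).congr_deriv ?_
  rw [Real.rpow_sub_one (by positivity)]
  field_simp

noncomputable def jbPoly (r : ℝ) (p : ℝ[X]) (t : ℝ) : ℂ :=
  ((jb t ^ r * p.eval (sqFrac t) : ℝ) : ℂ)

noncomputable def jbPolyDop (r : ℝ) (p : ℝ[X]) : ℝ[X] :=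
  C 2 * X * (1 - X) * derivative p + C r * X * p

lemma hasDerivAt_jbPoly (r : ℝ) (p : ℝ[X]) (t : ℝ) :
    HasDerivAt (jbPoly r p) ((r * t / (1 + t ^ 2) * jb t ^ r * p.eval (sqFrac t)
      + jb t ^ r * ((derivative p).eval (sqFrac t) * (2 * t / (1 + t ^ 2) ^ 2)) : ℝ) : ℂ) t :=
  ((hasDerivAt_jb_rpow r t).mul ((p.hasDerivAt _).comp t (hasDerivAt_sqFrac t))).ofReal_comp

lemma Dop_jbPoly (r : ℝ) (p : ℝ[X]) : Dop (jbPoly r p) = jbPoly r (jbPolyDop r p) := by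
  ext t
  simp only [Dop, (hasDerivAt_jbPoly r p t).deriv, jbPoly, jbPolyDop, sqFrac]
  simp only [eval_add, eval_mul, eval_sub, eval_C, eval_X, eval_one]
  push_cast
  have : (1 + (t : ℂ) ^ 2) ≠ 0 := by exact_mod_cast (show (1 + t ^ 2) ≠ 0 by positivity)
  field_simp
  ring

lemma differentiable_jbPoly (r : ℝ) (p : ℝ[X]) : Differentiable ℝ (jbPoly r p) :=
  fun t => (hasDerivAt_jbPoly r p t).differentiableAt

lemma jbPoly_add (r : ℝ) (p q : ℝ[X]) (t : ℝ) :
    jbPoly r (p + q) t = jbPoly r p t + jbPoly r q t := by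
  simp only [jbPoly, eval_add, mul_add, Complex.ofReal_add]

lemma jbPoly_zero (r : ℝ) (t : ℝ) : jbPoly r 0 t = 0 := by
  simp [jbPoly]

lemma jbPoly_one (r : ℝ) (t : ℝ) : jbPoly r 1 t = ((jb t ^ r : ℝ) : ℂ) := by
  simp [jbPoly]

lemma norm_jbPoly (r : ℝ) (p : ℝ[X]) (t : ℝ) :
    ‖jbPoly r p t‖ = jb t ^ r * |p.eval (sqFrac t)| := by
  rw [jbPoly, Complex.norm_real, Real.norm_eq_abs, abs_mul, abs_of_pos (jb_rpow_pos r t)]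

lemma Dop_jbPoly_mul (r : ℝ) (p : ℝ[X]) {v : ℝ → ℂ} (hv : Differentiable ℝ v) :
    Dop (fun t => jbPoly r p t * v t)
      = fun t => jbPoly r (jbPolyDop r p) t * v t + jbPoly r p t * Dop v t := by
  ext t
  rw [Dop_fun_mul (differentiable_jbPoly r p t) (hv t), Dop_jbPoly]

lemma exists_Dop_iterate_jb_rpow_mul (r : ℝ) (m : ℕ) :
    ∃ q : ℕ → ℝ[X], q m = 1 ∧ ∀ u : ℝ → ℂ, ContDiff ℝ (⊤ : ℕ∞) u →
      Dop^[m] (fun t => ((jb t ^ r : ℝ) : ℂ) * u t)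
        = fun η => ∑ l ∈ range (m + 1), jbPoly r (q l) η * Dop^[l] u η := by
  induction m with
  | zero => exact ⟨fun _ => 1, rfl, fun u _ => by ext; simp [jbPoly_one]⟩
  | succ m ih =>
    obtain ⟨q, hqm, hq⟩ := ih
    refine ⟨fun l =>
      (if l ≤ m then jbPolyDop r (q l) else 0) + (if l = 0 then 0 else q (l - 1)),
      by simp [hqm], fun u hu => ?_⟩
    have hdiff : ∀ l, Differentiable ℝ (Dop^[l] u) := fun l =>
      (hu.iterate_Dop l).differentiable (by simp)
    ext η
    rw [Function.iterate_succ_apply', hq u hu,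
      Dop_fun_sum (F := fun l t => jbPoly r (q l) t * Dop^[l] u t) fun l _ =>
        ((differentiable_jbPoly r (q l)).mul (hdiff l)).differentiableAt]
    simp only [Dop_jbPoly_mul r _ (hdiff _), jbPoly_add, add_mul, sum_add_distrib]
    congr 1
    · rw [sum_range_succ _ (m + 1), if_neg (by omega), jbPoly_zero, zero_mul, add_zero]
      exact sum_congr rfl fun l hl => by rw [if_pos (Nat.lt_succ_iff.mp (mem_range.mp hl))]
    · simp [sum_range_succ', jbPoly_zero, Function.iterate_succ_apply']

lemma exists_abs_eval_sqFrac_le (s : Finset ℕ) (q : ℕ → ℝ[X]) :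
    ∃ B, ∀ l ∈ s, ∀ t, |(q l).eval (sqFrac t)| ≤ B := by
  obtain ⟨B, hB⟩ := isCompact_Icc.exists_bound_of_continuousOn
    (f := fun x => ∑ l ∈ s, |(q l).eval x|) (by fun_prop)
  refine ⟨B, fun l hl t => ?_⟩
  calc |(q l).eval (sqFrac t)| ≤ ∑ l ∈ s, |(q l).eval (sqFrac t)| :=
        single_le_sum (f := fun l => |(q l).eval (sqFrac t)|) (fun _ _ => abs_nonneg _) hl
    _ ≤ B := (le_abs_self _).trans (hB _ (sqFrac_mem_Icc t))

theorem stmt3 (m : ℕ) (r : ℝ) :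
    ∃ C : ℝ, 0 < C ∧
      ∀ u : ℝ → ℂ, ContDiff ℝ (⊤ : ℕ∞) u → ∀ η : ℝ,
        ‖Dop^[m] (fun t => ((jb t ^ r : ℝ) : ℂ) * u t) η
            - ((jb η ^ r : ℝ) : ℂ) * Dop^[m] u η‖
          ≤ C * jb η ^ r * ∑ l ∈ Finset.range (m + 1), ‖Dop^[l] u η‖ := by
  obtain ⟨q, hqm, hexp⟩ := exists_Dop_iterate_jb_rpow_mul r m
  obtain ⟨B, hB⟩ := exists_abs_eval_sqFrac_le (range m) q
  refine ⟨max B 1, by positivity, fun u hu η => ?_⟩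
  have hw : 0 < jb η ^ r := jb_rpow_pos r η
  rw [hexp u hu]
  beta_reduce
  rw [sum_range_succ _ m, hqm, jbPoly_one, add_sub_cancel_right, mul_assoc, mul_sum]
  calc ‖∑ l ∈ range m, jbPoly r (q l) η * Dop^[l] u η‖
      ≤ ∑ l ∈ range m, max B 1 * (jb η ^ r * ‖Dop^[l] u η‖) := by
        refine norm_sum_le_of_le _ fun l hl => ?_
        rw [norm_mul, norm_jbPoly, mul_comm (jb η ^ r), mul_assoc]
        exact mul_le_mul_of_nonneg_right ((hB l hl η).trans (le_max_left B 1)) (by positivity)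
    _ ≤ ∑ l ∈ range (m + 1), max B 1 * (jb η ^ r * ‖Dop^[l] u η‖) :=
        sum_le_sum_of_subset_of_nonneg (range_subset_range.mpr m.le_succ)
          fun _ _ _ => by positivity
    _ = max B 1 * ∑ l ∈ range (m + 1), jb η ^ r * ‖Dop^[l] u η‖ := (mul_sum _ _ _).symm
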